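/- arXiv:1603.00161 — 2 statements merged into one kernel-verified Lean document; each statement's English description precedes it below -/
import Mathlib

section
/- Let q be a power of an odd prime and let d ∈ 𝔽_q[T] be square-free and non-constant. Then the integral closure of A = 𝔽_q[T] in K = 𝔽_q(T)(√d) equals the subring A[√d] = {x + y·√d : x, y ∈ A}. -/
/-! If `z = a + b√d` with `b ≠ 0` is integral over `A`, its minimal polynomial over `F` is
`X² - 2aX + (a² - b²d)`, and since `A` is integrally closed this polynomial has coefficients in
`A`. As `2` is invertible, `a ∈ A`, hence `b²d ∈ A`; writing `b` as a reduced fraction, the square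
of its denominator divides the square-free `d`, so the denominator is a unit and `b ∈ A`. -/

open Polynomial IsLocalization IsFractionRing

theorem isIntegral_algebraMap_add_algebraMap_mul_of_sq_eq {R K : Type*} [CommRing R] [CommRing K]
    [Algebra R K] {d : R} {s : K} (hs : s ^ 2 = algebraMap R K d) (x y : R) :
    IsIntegral R (algebraMap R K x + algebraMap R K y * s) := by
  have hsi : IsIntegral R s := ⟨X ^ 2 - C d, monic_X_pow_sub_C d two_ne_zero, by simp [hs]⟩
  exact isIntegral_algebraMap.add (isIntegral_algebraMap.mul hsi)

section Quadratic

variable {F K : Type*} [Field F] [Field K] [Algebra F K] {δ : F} {s : K}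

theorem minpoly_algebraMap_add_algebraMap_mul (hδ : ¬IsSquare δ)
    (hs : s ^ 2 = algebraMap F K δ) (a : F) {b : F} (hb : b ≠ 0) :
    minpoly F (algebraMap F K a + algebraMap F K b * s) =
      X ^ 2 - C (2 * a) * X + C (a ^ 2 - b ^ 2 * δ) := by
  set z := algebraMap F K a + algebraMap F K b * s
  set p : F[X] := X ^ 2 - C (2 * a) * X + C (a ^ 2 - b ^ 2 * δ)
  have hp : p.Monic := by unfold p; monicity!
  have hpdeg : p.natDegree = 2 := by unfold p; compute_degree!
  have hroot : aeval z p = 0 := by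
    simp only [p, z, map_add, map_sub, map_mul, map_pow, aeval_X, aeval_C, map_ofNat]
    linear_combination (algebraMap F K b) ^ 2 * hs
  have hz : IsIntegral F z := ⟨p, hp, by rwa [aeval_def] at hroot⟩
  have hzF : z ∉ (algebraMap F K).range := by
    rintro ⟨c, hc⟩
    have hbK : algebraMap F K b ≠ 0 := (_root_.map_ne_zero _).mpr hb
    refine hδ ⟨(c - a) / b, (algebraMap F K).injective ?_⟩
    rw [map_mul, map_div₀, map_sub, hc, ← hs]
    field_simp
    ring
  refine (eq_of_monic_of_dvd_of_natDegree_le (minpoly.monic hz) hp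
    (minpoly.dvd F z hroot) ?_).symm
  rw [hpdeg]
  exact (minpoly.two_le_natDegree_iff hz).mpr hzF

end Quadratic

section SquarefreeRadicand

variable {R F : Type*} [CommRing R] [IsDomain R] [UniqueFactorizationMonoid R]
  [Field F] [Algebra R F] [IsFractionRing R F] {d : R}

theorem isInteger_of_isInteger_sq_mul_squarefree (hd : Squarefree d) {b : F}
    (h : IsInteger R (b ^ 2 * algebraMap R F d)) : IsInteger R b := by
  obtain ⟨r, hr⟩ := h
  rw [← isUnit_den_iff]
  have hbm : b * algebraMap R F (den R b) = algebraMap R F (num R b) :=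
    num_mul_den_eq_num_iff_eq.mpr rfl
  have key : num R b ^ 2 * d = r * (den R b : R) ^ 2 :=
    IsFractionRing.injective R F (by simp only [map_mul, map_pow, ← hbm, hr]; ring)
  have hdvd : (den R b : R) ^ 2 ∣ d :=
    (num_den_reduced R b).symm.pow.dvd_of_dvd_mul_left ⟨r, by rw [key, mul_comm]⟩
  exact hd _ (by rwa [sq] at hdvd)

theorem not_isSquare_algebraMap_of_squarefree (hd : Squarefree d) (hdu : ¬IsUnit d) :
    ¬IsSquare (algebraMap R F d) := by
  rintro ⟨c, hc⟩
  obtain ⟨e, he⟩ := isInteger_of_isInteger_sq_mul_squarefree hd (b := c)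
    ⟨d ^ 2, by rw [map_pow, hc, sq, sq]⟩
  have hed : e * e = d := IsFractionRing.injective R F (by rw [map_mul, he, hc])
  have he : IsUnit e := hd e hed.dvd
  exact hdu (hed ▸ he.mul he)

variable {K : Type*} [Field K] [Algebra F K] [Algebra R K] [IsScalarTower R F K] {s : K}

theorem isInteger_of_isIntegral_algebraMap_add_algebraMap_mul (h2 : IsUnit (2 : R))
    (hd : Squarefree d) (hdu : ¬IsUnit d) (hs : s ^ 2 = algebraMap R K d) {a b : F}
    (hz : IsIntegral R (algebraMap F K a + algebraMap F K b * s)) :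
    IsInteger R a ∧ IsInteger R b := by
  rcases eq_or_ne b 0 with rfl | hb
  · rw [map_zero, zero_mul, add_zero, isIntegral_algebraMap_iff (algebraMap F K).injective] at hz
    exact ⟨IsIntegrallyClosed.isIntegral_iff.mp hz, isInteger_zero⟩
  have hsF : s ^ 2 = algebraMap F K (algebraMap R F d) := by
    rw [hs, IsScalarTower.algebraMap_apply R F K]
  have hmin := minpoly_algebraMap_add_algebraMap_mul
    (not_isSquare_algebraMap_of_squarefree hd hdu) hsF a hb
  have hcoeff (i : ℕ) : ∃ m : R, algebraMap R F m = (X ^ 2 - C (2 * a) * X +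
      C (a ^ 2 - b ^ 2 * algebraMap R F d)).coeff i :=
    ⟨(minpoly R _).coeff i, by rw [← hmin, minpoly.isIntegrallyClosed_eq_field_fractions' F hz,
      coeff_map]⟩
  obtain ⟨m₁, hm₁⟩ : ∃ m : R, algebraMap R F m = -(2 * a) := by
    simpa [coeff_X, coeff_C, -map_sub, -map_mul, -map_pow] using hcoeff 1
  obtain ⟨m₀, hm₀⟩ : ∃ m : R, algebraMap R F m = a ^ 2 - b ^ 2 * algebraMap R F d := by
    simpa [coeff_X, coeff_C, -map_sub, -map_mul, -map_pow] using hcoeff 0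
  have h2inv : algebraMap R F ↑h2.unit⁻¹ * 2 = 1 := by
    rw [← map_ofNat (algebraMap R F) 2, ← map_mul, h2.val_inv_mul, map_one]
  have ha : algebraMap R F (-↑h2.unit⁻¹ * m₁) = a := by
    rw [map_mul, map_neg, hm₁]
    linear_combination a * h2inv
  refine ⟨⟨_, ha⟩, isInteger_of_isInteger_sq_mul_squarefree hd ⟨(-↑h2.unit⁻¹ * m₁) ^ 2 - m₀, ?_⟩⟩
  rw [map_sub, map_pow, ha, hm₀]
  ring

end SquarefreeRadicand

/-- Let `q` be a power of an odd prime and let `d ∈ 𝔽_q[T]` be square-free and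
non-constant.  Then the integral closure of `A = 𝔽_q[T]` in `K = 𝔽_q(T)(√d)`
equals the subring `A[√d] = {x + y·√d : x, y ∈ A}`. -/
theorem stmt_5 (q : ℕ) (Fq : Type) [Field Fq] [Fintype Fq]
    (hq : Fintype.card Fq = q) (hodd : Odd q)
    (d : Polynomial Fq) (hsf : Squarefree d) (hnc : 0 < d.natDegree)
    (K : Type) [Field K] [Algebra (RatFunc Fq) K]
    [Algebra (Polynomial Fq) K] [IsScalarTower (Polynomial Fq) (RatFunc Fq) K]
    (sqd : K) (hsqd : sqd ^ 2 = algebraMap (Polynomial Fq) K d)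
    (hgen : ∀ z : K, ∃ a b : RatFunc Fq,
      z = algebraMap (RatFunc Fq) K a + algebraMap (RatFunc Fq) K b * sqd) :
    ∀ z : K, z ∈ integralClosure (Polynomial Fq) K ↔
      ∃ x y : Polynomial Fq,
        z = algebraMap (Polynomial Fq) K x + algebraMap (Polynomial Fq) K y * sqd := by
  have h2 : IsUnit (2 : Fq[X]) := by
    have h2ne : (2 : Fq) ≠ 0 := Ring.two_ne_zero <| by
      rw [Ne, FiniteField.even_card_iff_char_two, hq, Nat.odd_iff.mp hodd]
      exact one_ne_zero
    exact map_ofNat (C : Fq →+* Fq[X]) 2 ▸ h2ne.isUnit.map C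
  have hdu : ¬IsUnit d := fun h => hnc.ne' (natDegree_eq_zero_of_isUnit h)
  intro z
  refine ⟨fun hz => ?_, ?_⟩
  · obtain ⟨a, b, rfl⟩ := hgen z
    obtain ⟨⟨x, rfl⟩, ⟨y, rfl⟩⟩ :=
      isInteger_of_isIntegral_algebraMap_add_algebraMap_mul h2 hsf hdu hsqd hz
    exact ⟨x, y, by simp only [← IsScalarTower.algebraMap_apply]⟩
  · rintro ⟨x, y, rfl⟩
    exact isIntegral_algebraMap_add_algebraMap_mul_of_sq_eq hsqd x y
end

section
/- Let q be a power of an odd prime and let d ∈ 𝔽_q[T] be square-free and non-constant. If g, h ∈ A = 𝔽_q[T] are such that g + h·√d is a unit of the ring A[√d] and h ≠ 0, then 2·deg g = deg d + 2·deg h; in particular 2·deg g ≥ deg d. -/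
open Polynomial

/-
If `g + h√d` is a unit of `A[√d]`, then comparing coefficients of `1` and `√d` in
`(g + h√d)(g' + h'√d) = 1` shows that its norm `g² - d h²` is a unit of `A`, i.e. a nonzero
constant `c`. Then `d h² = g² - c`, and comparing degrees gives `deg d + 2 deg h = 2 deg g`.
Coefficients can be compared because `d`, being square-free and non-constant, is not a square
in `𝔽_q(T)`: a square root would be integral over the integrally closed ring `A`, hence a
polynomial `p` with `p² = d`, forcing `p` to be a unit.
-/

theorem IsIntegrallyClosed.not_isSquare_algebraMap_of_squarefree {R L : Type*} [CommRing R]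
    [IsDomain R] [IsIntegrallyClosed R] [Field L] [Algebra R L] [IsFractionRing R L] {d : R}
    (hsf : Squarefree d) (hd : ¬IsUnit d) : ¬IsSquare (algebraMap R L d) := by
  rintro ⟨r, hr⟩
  have hint : IsIntegral R r :=
    ⟨X ^ 2 - C d, monic_X_pow_sub_C d two_ne_zero, by simp [eval₂_sub, sq, hr]⟩
  obtain ⟨p, rfl⟩ := IsIntegrallyClosed.isIntegral_iff.mp hint
  have hp : p * p = d := IsFractionRing.injective R L (by rw [map_mul, hr])
  have hpu : IsUnit p := hsf p ⟨1, by rw [hp, mul_one]⟩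
  exact hd (hp ▸ hpu.mul hpu)

theorem eq_zero_and_eq_zero_of_algebraMap_add_algebraMap_mul_eq_zero {F K : Type*} [Field F]
    [Field K] [Algebra F K] {s : K} (hs : s ∉ Set.range (algebraMap F K)) {a b : F}
    (hab : algebraMap F K a + algebraMap F K b * s = 0) : a = 0 ∧ b = 0 := by
  obtain rfl | hb := eq_or_ne b 0
  · simpa using hab
  · refine absurd ⟨-a / b, ?_⟩ hs
    have hb' : algebraMap F K b ≠ 0 := (_root_.map_ne_zero _).mpr hb
    rw [map_div₀, map_neg, div_eq_iff hb']
    linear_combination -hab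

theorem isUnit_sq_sub_mul_sq_of_mul_eq_one {R K : Type*} [CommRing R] [CommRing K]
    [Algebra R K] {s : K} {d : R} (hsd : s ^ 2 = algebraMap R K d)
    (hind : ∀ a b : R, algebraMap R K a + algebraMap R K b * s = 0 → a = 0 ∧ b = 0)
    {g h g' h' : R}
    (hmul : (algebraMap R K g + algebraMap R K h * s) *
      (algebraMap R K g' + algebraMap R K h' * s) = 1) :
    IsUnit (g ^ 2 - d * h ^ 2) := by
  obtain ⟨hre, him⟩ := hind (g * g' + d * (h * h') - 1) (g * h' + g' * h) (by
    simp only [map_sub, map_add, map_mul, map_one]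
    linear_combination hmul - algebraMap R K h * algebraMap R K h' * hsd)
  refine .of_mul_eq_one (g' ^ 2 - d * h' ^ 2) ?_
  linear_combination (g * g' + d * (h * h') + 1) * hre - d * (g * h' + g' * h) * him

theorem Polynomial.two_mul_natDegree_eq_of_isUnit_sq_sub_mul_sq {R : Type*} [CommRing R]
    [IsDomain R] {d g h : R[X]} (hd : d ≠ 0) (hh : h ≠ 0) (hu : IsUnit (g ^ 2 - d * h ^ 2)) :
    2 * g.natDegree = d.natDegree + 2 * h.natDegree := by
  obtain ⟨c, -, hc⟩ := Polynomial.isUnit_iff.mp hu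
  have hdh : d * h ^ 2 = g ^ 2 - C c := by rw [hc]; ring
  rw [← natDegree_pow, ← natDegree_pow, ← natDegree_mul hd (pow_ne_zero 2 hh), hdh,
    natDegree_sub_C]

theorem stmt_7_general (Fq : Type) [Field Fq]
    (d : Polynomial Fq) (hsf : Squarefree d) (hnc : 0 < d.natDegree)
    (K : Type) [Field K] [Algebra (RatFunc Fq) K]
    [Algebra (Polynomial Fq) K] [IsScalarTower (Polynomial Fq) (RatFunc Fq) K]
    (sqd : K) (hsqd : sqd ^ 2 = algebraMap (Polynomial Fq) K d)
    (g h : Polynomial Fq) (hh : h ≠ 0)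
    (hu : ∃ g' h' : Polynomial Fq,
      (algebraMap (Polynomial Fq) K g + algebraMap (Polynomial Fq) K h * sqd) *
        (algebraMap (Polynomial Fq) K g' + algebraMap (Polynomial Fq) K h' * sqd) = 1) :
    2 * g.natDegree = d.natDegree + 2 * h.natDegree ∧ d.natDegree ≤ 2 * g.natDegree := by
  obtain ⟨g', h', hmul⟩ := hu
  have hd : ¬IsUnit d := fun hd => hnc.ne' (natDegree_eq_zero_of_isUnit hd)
  have hs : sqd ∉ Set.range (algebraMap (RatFunc Fq) K) := by
    rintro ⟨r, rfl⟩
    refine IsIntegrallyClosed.not_isSquare_algebraMap_of_squarefree hsf hd ⟨r, ?_⟩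
    apply (algebraMap (RatFunc Fq) K).injective
    rw [map_mul, ← sq, hsqd, IsScalarTower.algebraMap_apply Fq[X] (RatFunc Fq) K]
  have hind : ∀ a b : Fq[X], algebraMap Fq[X] K a + algebraMap Fq[X] K b * sqd = 0 →
      a = 0 ∧ b = 0 := by
    intro a b hab
    simp only [IsScalarTower.algebraMap_apply Fq[X] (RatFunc Fq) K] at hab
    obtain ⟨ha, hb⟩ := eq_zero_and_eq_zero_of_algebraMap_add_algebraMap_mul_eq_zero hs hab
    exact ⟨(IsFractionRing.to_map_eq_zero_iff).mp ha, (IsFractionRing.to_map_eq_zero_iff).mp hb⟩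
  have hdeg := two_mul_natDegree_eq_of_isUnit_sq_sub_mul_sq hsf.ne_zero hh
    (isUnit_sq_sub_mul_sq_of_mul_eq_one hsqd hind hmul)
  exact ⟨hdeg, by omega⟩

/-- Let `q` be a power of an odd prime and let `d ∈ 𝔽_q[T]` be square-free and
non-constant.  If `g, h ∈ A = 𝔽_q[T]` are such that `g + h·√d` is a unit of the
ring `A[√d]` (i.e. it has an inverse of the form `g' + h'·√d` with `g', h' ∈ A`)
and `h ≠ 0`, then `2·deg g = deg d + 2·deg h`; in particular `2·deg g ≥ deg d`. -/
theorem stmt_7 (q : ℕ) (Fq : Type) [Field Fq] [Fintype Fq]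
    (hq : Fintype.card Fq = q) (hodd : Odd q)
    (d : Polynomial Fq) (hsf : Squarefree d) (hnc : 0 < d.natDegree)
    (K : Type) [Field K] [Algebra (RatFunc Fq) K]
    [Algebra (Polynomial Fq) K] [IsScalarTower (Polynomial Fq) (RatFunc Fq) K]
    (sqd : K) (hsqd : sqd ^ 2 = algebraMap (Polynomial Fq) K d)
    (hgen : ∀ z : K, ∃ a b : RatFunc Fq,
      z = algebraMap (RatFunc Fq) K a + algebraMap (RatFunc Fq) K b * sqd)
    (g h : Polynomial Fq) (hh : h ≠ 0)
    (hu : ∃ g' h' : Polynomial Fq,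
      (algebraMap (Polynomial Fq) K g + algebraMap (Polynomial Fq) K h * sqd) *
        (algebraMap (Polynomial Fq) K g' + algebraMap (Polynomial Fq) K h' * sqd) = 1) :
    2 * g.natDegree = d.natDegree + 2 * h.natDegree ∧ d.natDegree ≤ 2 * g.natDegree :=
  stmt_7_general Fq d hsf hnc K sqd hsqd g h hh hu
end
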